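/- Polynomial covering bound for the normalized resistance metric: Let (G, μ, B) be a weighted graph with wired boundary, let h : ℕ → ℕ be strictly increasing with h(0) = 0 satisfying the doubling property with constants (β₁, β₂, C), and suppose Assumption A holds with constants (α, c₁, c₂, c₃). Set σ̄² := max_{x ∈ V} R_B(x,B) and γ := 2α/β₁. Then there exists a constant c′ > 0 depending only on (β₁, β₂, C, α, c₁, c₂, c₃) such that for every ε ∈ (0,1], the vertex set V can be covered by at most c′ ε^{−γ} sets of the form {y ∈ V : R_B(x,y)^{1/2} ≤ ε σ̄} with x ∈ V. -/

import Mathlib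

noncomputable section

/-- A weighted finite connected graph with a wired boundary. -/
structure WiredGraph where
  V : Type
  [fintypeV : Fintype V]
  [decEqV : DecidableEq V]
  G : SimpleGraph V
  conn : G.Connected
  nontriv : Nontrivial V
  mu : V → V → ℝ
  mu_symm : ∀ x y, mu x y = mu y x
  mu_nonneg : ∀ x y, 0 ≤ mu x y
  mu_pos_iff : ∀ x y, 0 < mu x y ↔ G.Adj x y
  B : Set V
  [decB : DecidablePred (· ∈ B)]
  B_nonempty : B.Nonempty
  B_ne_univ : B ≠ Set.univ
  compl_conn : (SimpleGraph.induce (Bᶜ : Set V) G).Connected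

attribute [instance] WiredGraph.fintypeV WiredGraph.decEqV WiredGraph.decB

open MeasureTheory ProbabilityTheory

namespace WiredGraph

variable (W : WiredGraph)

/-- Dirichlet energy of a function. -/
def energy (f : W.V → ℝ) : ℝ :=
  (1 / 2) * ∑ w : W.V, ∑ z : W.V, (f w - f z) ^ 2 * W.mu w z

/-- Wired effective resistance between two vertices. -/
def RB (x y : W.V) : ℝ :=
  if x = y then 0
  else if x ∈ W.B ∧ y ∈ W.B then 0
  else (sInf {e : ℝ | ∃ f : W.V → ℝ, f x = 1 ∧ f y = 0 ∧
        (∀ b ∈ W.B, ∀ b' ∈ W.B, f b = f b') ∧ e = W.energy f})⁻¹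

/-- Wired effective resistance from a vertex to the boundary. -/
def RBbd (x : W.V) : ℝ := W.RB x W.B_nonempty.choose

/-- The Dirichlet Laplacian. -/
def dirichletL : Matrix {x : W.V // x ∉ W.B} {x : W.V // x ∉ W.B} ℝ :=
  fun x y => if x = y then ∑ z : W.V, W.mu x.1 z else -W.mu x.1 y.1

/-- Covariance of the Gaussian free field: `L⁻¹` extended by `0` on the boundary. -/
def gffCov : W.V → W.V → ℝ := fun x y =>
  if hx : x ∈ W.B then 0 else if hy : y ∈ W.B then 0 else
    (W.dirichletL)⁻¹ ⟨x, hx⟩ ⟨y, hy⟩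

/-- Graph distance to the boundary. -/
def dB (x : W.V) : ℕ := sInf ((fun b => W.G.dist x b) '' W.B)

/-- Maximal graph distance to the boundary. -/
def dmax : ℕ := sSup (Set.range W.dB)

/-- Minimal number of closed graph-distance balls of radius `ε` needed to cover `V`. -/
def coverNum (ε : ℝ) : ℕ :=
  sInf {n : ℕ | ∃ s : Finset W.V, s.card = n ∧
    ∀ x : W.V, ∃ c ∈ s, (W.G.dist x c : ℝ) ≤ ε}

/-- Maximal variance of the GFF. -/
def sigmaSq : ℝ := ⨆ x : {x : W.V // x ∉ W.B}, W.gffCov x.1 x.1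

/-- Maximal standard deviation of the GFF. -/
def sigmaBar : ℝ := Real.sqrt W.sigmaSq

/-- Maximum of a field over all vertices. -/
def maxOf (x : W.V → ℝ) : ℝ := ⨆ z : W.V, x z

end WiredGraph

/-- Doubling property of `h` with constants `β₁ ≤ β₂` and `C`. -/
def Doubling (h : ℕ → ℕ) (β₁ β₂ C : ℝ) : Prop :=
  ∀ r R : ℕ, 0 < r → r ≤ R →
    C⁻¹ * ((R : ℝ) / r) ^ β₁ ≤ (h R : ℝ) / (h r) ∧
    (h R : ℝ) / (h r) ≤ C * ((R : ℝ) / r) ^ β₂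

/-- Assumption A with constants `α, c₁, c₂, c₃`. -/
def AssumptionA (W : WiredGraph) (h : ℕ → ℕ) (α c₁ c₂ c₃ : ℝ) : Prop :=
  (∀ x y : W.V, W.RB x y ≤ c₁ * h (W.G.dist x y)) ∧
  (c₂ * (⨆ x : W.V, (h (W.dB x) : ℝ)) ≤ ⨆ x : W.V, W.RBbd x) ∧
  (∀ δ : ℝ, 0 < δ → δ ≤ 1 → (W.coverNum (δ * W.dmax) : ℝ) ≤ c₃ * δ ^ (-α))

/-- A centered Gaussian random vector with covariance `Γ`, characterized through its
one-dimensional projections. -/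
def IsCenteredGaussianVec {ι : Type} [Fintype ι] (ν : Measure (ι → ℝ)) (Γ : ι → ι → ℝ) : Prop :=
  IsProbabilityMeasure ν ∧
    ∀ a : ι → ℝ,
      ν.map (fun x => ∑ i, a i * x i) =
        gaussianReal 0 (Real.toNNReal (∑ i, ∑ j, a i * a j * Γ i j))

/-- The Gaussian free field on a weighted graph with wired boundary. -/
def IsGFF (W : WiredGraph) (ν : Measure (W.V → ℝ)) : Prop :=
  IsCenteredGaussianVec ν W.gffCov

/-! Cover `V` by `N_G(δ d_max) ≤ c₃ δ^{-α}` graph balls of radius `δ d_max`. Within such a ball,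
Assumption A(i), the lower doubling bound and Assumption A(ii) give
`R_B(x,y) ≤ c₁ h(d(x,y)) ≤ c₁ C δ^{β₁} h(d_max) ≤ (c₁ C / c₂) δ^{β₁} σ̄²`,
so the scale `δ ≍ ε^{2/β₁}` puts every graph ball inside a set `{y : R_B(x,y)^{1/2} ≤ ε σ̄}`. -/

lemma Doubling.natCast_le_mul_rpow {h : ℕ → ℕ} {β₁ β₂ C : ℝ} (hdoub : Doubling h β₁ β₂ C)
    (hC : 0 < C) {r R : ℕ} (hr : 0 < r) (hrR : r ≤ R) :
    (h r : ℝ) ≤ C * ((r : ℝ) / R) ^ β₁ * h R := by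
  rcases (Nat.cast_nonneg (h r) : (0 : ℝ) ≤ h r).eq_or_lt with hr0 | hr0
  · rw [← hr0]
    positivity
  have hlow := (hdoub r R hr hrR).1
  have hR : (0 : ℝ) < R := by exact_mod_cast hr.trans_le hrR
  rw [le_div_iff₀ hr0, ← inv_div, Real.inv_rpow (by positivity)] at hlow
  calc (h r : ℝ) = C * ((r : ℝ) / R) ^ β₁ * (C⁻¹ * (((r : ℝ) / R) ^ β₁)⁻¹ * h r) := by
        field_simp
    _ ≤ C * ((r : ℝ) / R) ^ β₁ * h R := by gcongr

namespace WiredGraph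

variable (W : WiredGraph)

lemma RB_nonneg (x y : W.V) : 0 ≤ W.RB x y := by
  unfold RB
  split_ifs
  · exact le_rfl
  · exact le_rfl
  · refine inv_nonneg.mpr (Real.sInf_nonneg ?_)
    rintro e ⟨f, -, -, -, rfl⟩
    unfold energy
    refine mul_nonneg (by norm_num) (Finset.sum_nonneg fun w _ => Finset.sum_nonneg fun z _ => ?_)
    exact mul_nonneg (sq_nonneg _) (W.mu_nonneg w z)

lemma iSup_RBbd_nonneg : 0 ≤ ⨆ z : W.V, W.RBbd z :=
  Real.iSup_nonneg fun _ => W.RB_nonneg _ _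

lemma exists_dB_eq_dmax : ∃ x, W.dB x = W.dmax :=
  have : Nonempty W.V := W.nontriv.to_nonempty
  (Set.range_nonempty W.dB).csSup_mem (Set.finite_range _)

lemma le_iSup_comp_dB_dmax (f : ℕ → ℝ) : f W.dmax ≤ ⨆ x, f (W.dB x) := by
  obtain ⟨x, hx⟩ := W.exists_dB_eq_dmax
  rw [← hx]
  exact le_ciSup (f := fun x => f (W.dB x)) (Set.finite_range _).bddAbove x

lemma exists_cover_card_eq_coverNum {r : ℝ} (hr : 0 ≤ r) :
    ∃ s : Finset W.V, s.card = W.coverNum r ∧ ∀ x, ∃ c ∈ s, (W.G.dist x c : ℝ) ≤ r := by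
  have hne : {n | ∃ s : Finset W.V, s.card = n ∧ ∀ x, ∃ c ∈ s, (W.G.dist x c : ℝ) ≤ r}.Nonempty :=
    ⟨_, Finset.univ, rfl, fun x => ⟨x, Finset.mem_univ x, by simpa using hr⟩⟩
  exact Nat.sInf_mem hne

lemma RB_le_of_dist_le_mul_dmax {h : ℕ → ℕ} {β₁ β₂ C c₁ c₂ δ : ℝ} (hβ₁ : 0 ≤ β₁) (hC : 0 < C)
    (hc₁ : 0 ≤ c₁) (hc₂ : 0 < c₂) (hdoub : Doubling h β₁ β₂ C) (h0 : h 0 = 0)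
    (hRB : ∀ x y : W.V, W.RB x y ≤ c₁ * h (W.G.dist x y))
    (hRBbd : c₂ * (⨆ x : W.V, (h (W.dB x) : ℝ)) ≤ ⨆ x : W.V, W.RBbd x)
    (hδ0 : 0 ≤ δ) (hδ1 : δ ≤ 1) {x y : W.V} (hxy : (W.G.dist x y : ℝ) ≤ δ * W.dmax) :
    W.RB x y ≤ c₁ * C / c₂ * δ ^ β₁ * ⨆ z : W.V, W.RBbd z := by
  set d := W.G.dist x y with hd_def
  rcases Nat.eq_zero_or_pos d with hd | hd
  · have := hRB x y
    rw [← hd_def, hd, h0, Nat.cast_zero, mul_zero] at this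
    exact this.trans (by have := W.iSup_RBbd_nonneg; positivity)
  have hd_le : d ≤ W.dmax := by
    have : (d : ℝ) ≤ W.dmax := hxy.trans (mul_le_of_le_one_left (by positivity) hδ1)
    exact_mod_cast this
  have hdδ : (d : ℝ) / W.dmax ≤ δ := by
    rw [div_le_iff₀ (by exact_mod_cast hd.trans_le hd_le)]
    exact hxy
  have hh_dmax : (h W.dmax : ℝ) ≤ (⨆ z : W.V, W.RBbd z) / c₂ := by
    rw [le_div_iff₀ hc₂, mul_comm]
    exact (mul_le_mul_of_nonneg_left (W.le_iSup_comp_dB_dmax (fun n => (h n : ℝ))) hc₂.le).trans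
      hRBbd
  calc W.RB x y ≤ c₁ * h d := hRB x y
    _ ≤ c₁ * (C * ((d : ℝ) / W.dmax) ^ β₁ * h W.dmax) := by
      gcongr
      exact hdoub.natCast_le_mul_rpow hC hd hd_le
    _ ≤ c₁ * (C * δ ^ β₁ * ((⨆ z : W.V, W.RBbd z) / c₂)) := by gcongr
    _ = c₁ * C / c₂ * δ ^ β₁ * ⨆ z : W.V, W.RBbd z := by ring

end WiredGraph

lemma mul_min_one_rpow_le_sq {a β ε : ℝ} (ha : 0 < a) (hβ : 0 < β) :
    a * min 1 ((ε ^ 2 / a) ^ β⁻¹) ^ β ≤ ε ^ 2 := by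
  calc a * min 1 ((ε ^ 2 / a) ^ β⁻¹) ^ β ≤ a * ((ε ^ 2 / a) ^ β⁻¹) ^ β := by
        gcongr
        exact min_le_right _ _
    _ = ε ^ 2 := by
      rw [← Real.rpow_mul (by positivity), inv_mul_cancel₀ hβ.ne', Real.rpow_one]
      field_simp

lemma min_one_rpow_neg_le {a β ε α : ℝ} (ha : 0 < a) (hβ : 0 < β) (hα : 0 ≤ α) (hε : 0 < ε)
    (hε1 : ε ≤ 1) :
    min 1 ((ε ^ 2 / a) ^ β⁻¹) ^ (-α) ≤ max 1 (a ^ (α / β)) * ε ^ (-(2 * α / β)) := by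
  have hεγ : 1 ≤ ε ^ (-(2 * α / β)) :=
    Real.one_le_rpow_of_pos_of_le_one_of_nonpos hε hε1 (neg_nonpos.mpr (by positivity))
  rcases min_choice 1 ((ε ^ 2 / a) ^ β⁻¹) with h | h <;> rw [h]
  · rw [Real.one_rpow]
    exact one_le_mul_of_one_le_of_one_le (le_max_left _ _) hεγ
  · calc ((ε ^ 2 / a) ^ β⁻¹) ^ (-α) = a ^ (α / β) * ε ^ (-(2 * α / β)) := by
          rw [← Real.rpow_mul (by positivity), Real.div_rpow (by positivity) ha.le,
            ← Real.rpow_natCast, ← Real.rpow_mul hε.le, show β⁻¹ * -α = -(α / β) by ring,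
            show ((2 : ℕ) : ℝ) * -(α / β) = -(2 * α / β) by push_cast; ring,
            Real.rpow_neg ha.le, div_inv_eq_mul, mul_comm]
      _ ≤ max 1 (a ^ (α / β)) * ε ^ (-(2 * α / β)) := by gcongr; exact le_max_right _ _

theorem normalized_resistance_covering_bound_general
    (β₁ β₂ C α c₁ c₂ c₃ : ℝ)
    (hβ₁ : 0 < β₁) (hC : 0 < C)
    (hα : 0 < α) (hc₁ : 0 < c₁) (hc₂ : 0 < c₂) (hc₃ : 0 < c₃) :
    ∃ c' : ℝ, 0 < c' ∧
      ∀ (W : WiredGraph) (h : ℕ → ℕ),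
        StrictMono h → h 0 = 0 → Doubling h β₁ β₂ C →
        AssumptionA W h α c₁ c₂ c₃ →
        ∀ ε : ℝ, 0 < ε → ε ≤ 1 →
          ∃ s : Finset W.V, (s.card : ℝ) ≤ c' * ε ^ (-(2 * α / β₁)) ∧
            ∀ y : W.V, ∃ x ∈ s,
              Real.sqrt (W.RB x y) ≤ ε * Real.sqrt (⨆ z : W.V, W.RBbd z) := by
  have ha : 0 < c₁ * C / c₂ := by positivity
  refine ⟨c₃ * max 1 ((c₁ * C / c₂) ^ (α / β₁)), by positivity, ?_⟩
  intro W h _ h0 hdoub ⟨hRB, hRBbd, hcover⟩ ε hε hε1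
  set δ := min 1 ((ε ^ 2 / (c₁ * C / c₂)) ^ β₁⁻¹)
  have hδ0 : 0 < δ := lt_min one_pos (by positivity)
  have hδ1 : δ ≤ 1 := min_le_left _ _
  obtain ⟨s, hs_card, hs_cover⟩ := W.exists_cover_card_eq_coverNum (r := δ * W.dmax) (by positivity)
  refine ⟨s, ?_, fun y => ?_⟩
  · calc (s.card : ℝ) = W.coverNum (δ * W.dmax) := by rw [hs_card]
      _ ≤ c₃ * δ ^ (-α) := hcover δ hδ0 hδ1
      _ ≤ c₃ * (max 1 ((c₁ * C / c₂) ^ (α / β₁)) * ε ^ (-(2 * α / β₁))) := by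
        gcongr
        exact min_one_rpow_neg_le ha hβ₁ hα.le hε hε1
      _ = _ := by ring
  obtain ⟨x, hx, hyx⟩ := hs_cover y
  refine ⟨x, hx, ?_⟩
  have hRBxy : W.RB x y ≤ ε ^ 2 * ⨆ z : W.V, W.RBbd z := by
    refine (W.RB_le_of_dist_le_mul_dmax hβ₁.le hC hc₁.le hc₂ hdoub h0 hRB hRBbd hδ0.le hδ1
      (by rwa [SimpleGraph.dist_comm])).trans ?_
    have := W.iSup_RBbd_nonneg
    gcongr
    exact mul_min_one_rpow_le_sq ha hβ₁
  calc Real.sqrt (W.RB x y) ≤ Real.sqrt (ε ^ 2 * ⨆ z : W.V, W.RBbd z) := Real.sqrt_le_sqrt hRBxy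
    _ = ε * Real.sqrt (⨆ z : W.V, W.RBbd z) := by
      rw [Real.sqrt_mul (sq_nonneg ε), Real.sqrt_sq hε.le]

/-- polynomial covering bound for the normalized resistance metric.
Under the doubling property of `h` and Assumption A, with `σ̄² = max_x R_B(x,B)` and
`γ = 2α/β₁`, there is a constant `c' > 0` depending only on the constants such that for every
`ε ∈ (0,1]` the vertex set can be covered by at most `c' ε^{−γ}` sets of the form
`{y : R_B(x,y)^{1/2} ≤ ε σ̄}`. -/
theorem normalized_resistance_covering_bound
    (β₁ β₂ C α c₁ c₂ c₃ : ℝ)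
    (hβ₁ : 0 < β₁) (hβ₁₂ : β₁ ≤ β₂) (hC : 0 < C)
    (hα : 0 < α) (hc₁ : 0 < c₁) (hc₂ : 0 < c₂) (hc₃ : 0 < c₃) :
    ∃ c' : ℝ, 0 < c' ∧
      ∀ (W : WiredGraph) (h : ℕ → ℕ),
        StrictMono h → h 0 = 0 → Doubling h β₁ β₂ C →
        AssumptionA W h α c₁ c₂ c₃ →
        ∀ ε : ℝ, 0 < ε → ε ≤ 1 →
          ∃ s : Finset W.V, (s.card : ℝ) ≤ c' * ε ^ (-(2 * α / β₁)) ∧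
            ∀ y : W.V, ∃ x ∈ s,
              Real.sqrt (W.RB x y) ≤ ε * Real.sqrt (⨆ z : W.V, W.RBbd z) :=
  normalized_resistance_covering_bound_general β₁ β₂ C α c₁ c₂ c₃ hβ₁ hC hα hc₁ hc₂ hc₃
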